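/- Let d ≥ 2 and 1 ≤ p < d, let λ : ℝ^d → ℝ be continuous and 2πℤ^d-periodic, and let T be a primitive integer p×d matrix. Then λ(S_T ∩ (−π,π]^d) = λ(S_T) = λ({k ∈ ℝ^d : T k = 0}), and this common image is a closed bounded interval: there exist real numbers a ≤ b with λ(S_T ∩ (−π,π]^d) = [a, b]. In particular the infimum and the supremum of λ over S_T are attained at points of S_T ∩ (−π,π]^d. -/

import Mathlib

open Matrix
open scoped Real BigOperators

/-!
Translating by a vector of `2πℤ^d` preserves both `λ` and `S_T`. Such a translation moves any
point of `S_T` into the cube `(-π, π]^d`, and, because `T` has an integer right inverse `S`,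
also into `ker T`: if `T k = 2π m` then `T (k - 2π S m) = 0`. Hence the three images coincide.
The common image is compact, being also the image of the compact set `S_T ∩ [-π, π]^d`, and
connected, being the image of the convex set `ker T`; so it is a closed interval whose
endpoints are values of `λ` on `S_T ∩ (-π, π]^d`.
-/

/-- Euclidean norm of a vector in `ℝ^n`. -/
noncomputable def euclNorm {n : ℕ} (x : Fin n → ℝ) : ℝ := Real.sqrt (∑ i, (x i)^2)

open scoped Classical in
/-- Smallest eigenvalue of a (Hermitian) real matrix. -/
noncomputable def matLamMin {n : ℕ} (A : Matrix (Fin n) (Fin n) ℝ) : ℝ :=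
  if h : A.IsHermitian then ⨅ i, h.eigenvalues i else 0

/-- `τ(T)`: square root of the smallest eigenvalue of `T * Tᵀ`. -/
noncomputable def matTau {p d : ℕ} (T : Matrix (Fin p) (Fin d) ℝ) : ℝ :=
  Real.sqrt (matLamMin (T * Tᵀ))

open scoped Classical in
/-- `A^{-1/2}`: the inverse of the positive (semi)definite square root of `A`. -/
noncomputable def matInvSqrt {n : ℕ} (A : Matrix (Fin n) (Fin n) ℝ) : Matrix (Fin n) (Fin n) ℝ :=
  if h : A.PosSemidef then
    ((h.1.eigenvectorUnitary : Matrix (Fin n) (Fin n) ℝ) *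
      diagonal ((↑) ∘ Real.sqrt ∘ h.1.eigenvalues) *
      (star h.1.eigenvectorUnitary : Matrix (Fin n) (Fin n) ℝ))⁻¹ else 0

/-- The representative of `x` in `(-π, π]` modulo `2πℤ`. -/
noncomputable def repPi (x : ℝ) : ℝ := x - 2*Real.pi*(⌈(x - Real.pi)/(2*Real.pi)⌉ : ℤ)

namespace Quasimomentum

variable {m n : Type*}

def quasimomentumSet [Fintype n] (A : Matrix m n ℝ) : Set (n → ℝ) :=
  {k | ∀ i, ∃ z : ℤ, (A *ᵥ k) i = 2 * π * z}

def halfOpenCube : Set (n → ℝ) := {k | ∀ i, k i ∈ Set.Ioc (-π) π}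

noncomputable def twoPiIntVec (z : n → ℤ) : n → ℝ := fun i => 2 * π * (z i : ℝ)

lemma isClosed_setOf_eq_two_pi_mul_int : IsClosed {x : ℝ | ∃ z : ℤ, x = 2 * π * z} := by
  have h : {x : ℝ | ∃ z : ℤ, x = 2 * π * z} =
      Homeomorph.mulLeft₀ (2 * π) (by positivity) '' Set.range ((↑) : ℤ → ℝ) := by
    ext x
    simp [eq_comm]
  rw [h, Homeomorph.isClosed_image]
  exact Real.isClosed_range_intCast

lemma exists_sub_twoPiIntVec_mem_halfOpenCube (k : n → ℝ) :
    ∃ z, k - twoPiIntVec z ∈ halfOpenCube := by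
  have hp : (0 : ℝ) < 2 * π := by positivity
  refine ⟨fun i => toIocDiv hp (-π) (k i), fun i => ?_⟩
  have h := toIocMod_mem_Ioc hp (-π) (k i)
  rw [← self_sub_toIocDiv_zsmul, zsmul_eq_mul, show -π + 2 * π = π by ring] at h
  simpa only [Pi.sub_apply, twoPiIntVec, mul_comm (2 * π)] using h

lemma apply_sub_twoPiIntVec {α : Type*} {f : (n → ℝ) → α}
    (hf : ∀ k z, f (k + twoPiIntVec z) = f k) (k : n → ℝ) (z : n → ℤ) :
    f (k - twoPiIntVec z) = f k := by
  rw [← hf (k - twoPiIntVec z) z, sub_add_cancel]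

section RealMatrix

variable [Fintype n] (A : Matrix m n ℝ)

lemma isClosed_quasimomentumSet : IsClosed (quasimomentumSet A) := by
  have h : quasimomentumSet A =
      ⋂ i, (fun k => (A *ᵥ k) i) ⁻¹' {x : ℝ | ∃ z : ℤ, x = 2 * π * z} := by
    ext k
    simp [quasimomentumSet]
  rw [h]
  exact isClosed_iInter fun i => isClosed_setOf_eq_two_pi_mul_int.preimage (by fun_prop)

lemma ker_subset_quasimomentumSet : {k | A *ᵥ k = 0} ⊆ quasimomentumSet A :=
  fun k (hk : A *ᵥ k = 0) i => ⟨0, by simp [hk]⟩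

lemma convex_ker : Convex ℝ {k | A *ᵥ k = 0} :=
  (LinearMap.ker A.mulVecLin).convex

end RealMatrix

section IntegerMatrix

variable [Fintype n] (T : Matrix m n ℤ)

lemma mulVec_twoPiIntVec (z : n → ℤ) :
    T.map ((↑) : ℤ → ℝ) *ᵥ twoPiIntVec z = twoPiIntVec (T *ᵥ z) := by
  ext i
  have h : twoPiIntVec z = (2 * π) • ((↑) ∘ z : n → ℝ) := rfl
  rw [h, mulVec_smul, Pi.smul_apply, smul_eq_mul, twoPiIntVec]
  simpa using ((Int.castRingHom ℝ).map_mulVec T z i).symm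

lemma sub_twoPiIntVec_mem_quasimomentumSet {k : n → ℝ}
    (hk : k ∈ quasimomentumSet (T.map ((↑) : ℤ → ℝ))) (z : n → ℤ) :
    k - twoPiIntVec z ∈ quasimomentumSet (T.map ((↑) : ℤ → ℝ)) := by
  intro i
  obtain ⟨w, hw⟩ := hk i
  refine ⟨w - (T *ᵥ z) i, ?_⟩
  rw [mulVec_sub, mulVec_twoPiIntVec, Pi.sub_apply, hw, twoPiIntVec]
  push_cast
  ring

lemma exists_sub_twoPiIntVec_mem_ker [Fintype m] [DecidableEq m] {S : Matrix n m ℤ}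
    (hTS : T * S = 1) {k : n → ℝ} (hk : k ∈ quasimomentumSet (T.map ((↑) : ℤ → ℝ))) :
    ∃ z, T.map ((↑) : ℤ → ℝ) *ᵥ (k - twoPiIntVec z) = 0 := by
  choose w hw using hk
  refine ⟨S *ᵥ w, ?_⟩
  rw [mulVec_sub, mulVec_twoPiIntVec, mulVec_mulVec, hTS, one_mulVec]
  ext i
  simp [hw, twoPiIntVec]

variable {α : Type*} {f : (n → ℝ) → α} (hf : ∀ k z, f (k + twoPiIntVec z) = f k)
include hf

lemma image_quasimomentumSet_inter_halfOpenCube :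
    f '' (quasimomentumSet (T.map ((↑) : ℤ → ℝ)) ∩ halfOpenCube) =
      f '' quasimomentumSet (T.map ((↑) : ℤ → ℝ)) := by
  refine (Set.image_mono Set.inter_subset_left).antisymm ?_
  rintro _ ⟨k, hk, rfl⟩
  obtain ⟨z, hz⟩ := exists_sub_twoPiIntVec_mem_halfOpenCube k
  exact ⟨_, ⟨sub_twoPiIntVec_mem_quasimomentumSet T hk z, hz⟩, apply_sub_twoPiIntVec hf k z⟩

lemma image_quasimomentumSet_eq_image_ker [Fintype m] [DecidableEq m] {S : Matrix n m ℤ}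
    (hTS : T * S = 1) :
    f '' quasimomentumSet (T.map ((↑) : ℤ → ℝ)) =
      f '' {k | T.map ((↑) : ℤ → ℝ) *ᵥ k = 0} := by
  refine Set.Subset.antisymm ?_ (Set.image_mono (ker_subset_quasimomentumSet _))
  rintro _ ⟨k, hk, rfl⟩
  obtain ⟨z, hz⟩ := exists_sub_twoPiIntVec_mem_ker T hTS hk
  exact ⟨_, hz, apply_sub_twoPiIntVec hf k z⟩

lemma isCompact_image_quasimomentumSet [TopologicalSpace α] (hcont : Continuous f) :
    IsCompact (f '' quasimomentumSet (T.map ((↑) : ℤ → ℝ))) := by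
  have h : f '' quasimomentumSet (T.map ((↑) : ℤ → ℝ)) =
      f '' (quasimomentumSet (T.map ((↑) : ℤ → ℝ)) ∩
        Set.Icc (fun _ => -π) (fun _ => π)) := by
    refine Set.Subset.antisymm ?_ (Set.image_mono Set.inter_subset_left)
    rw [← image_quasimomentumSet_inter_halfOpenCube T hf]
    exact Set.image_mono (Set.inter_subset_inter_right _
      fun k hk => ⟨fun i => (hk i).1.le, fun i => (hk i).2⟩)
  rw [h]
  exact (isCompact_Icc.inter_left (isClosed_quasimomentumSet _)).image hcont

end IntegerMatrix

section Extremum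

variable {α β : Type*} [TopologicalSpace β] [LinearOrder β] {f : α → β} {s t : Set α}

lemma exists_forall_le_of_image_eq [ClosedIicTopology β] (hst : f '' s = f '' t)
    (ht : IsCompact (f '' t)) (hne : t.Nonempty) : ∃ x ∈ s, ∀ y ∈ t, f x ≤ f y := by
  obtain ⟨a, ha, hmin⟩ := ht.exists_isLeast (hne.image f)
  rw [← hst] at ha
  obtain ⟨x, hx, rfl⟩ := ha
  exact ⟨x, hx, fun y hy => hmin (Set.mem_image_of_mem f hy)⟩

lemma exists_forall_ge_of_image_eq [ClosedIciTopology β] (hst : f '' s = f '' t)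
    (ht : IsCompact (f '' t)) (hne : t.Nonempty) : ∃ x ∈ s, ∀ y ∈ t, f y ≤ f x := by
  obtain ⟨a, ha, hmax⟩ := ht.exists_isGreatest (hne.image f)
  rw [← hst] at ha
  obtain ⟨x, hx, rfl⟩ := ha
  exact ⟨x, hx, fun y hy => hmax (Set.mem_image_of_mem f hy)⟩

end Extremum

end Quasimomentum

open Quasimomentum

theorem stmt_3_general (d p : ℕ)
    (lam : (Fin d → ℝ) → ℝ) (hcont : Continuous lam)
    (hper : ∀ (k : Fin d → ℝ) (n : Fin d → ℤ), lam (k + fun i => 2*π*(n i : ℝ)) = lam k)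
    (T : Matrix (Fin p) (Fin d) ℤ)
    (hprim : ∃ S : Matrix (Fin d) (Fin p) ℤ, T * S = 1) :
    lam '' ({k | ∀ i, ∃ n : ℤ, (T.map (Int.cast : ℤ → ℝ) *ᵥ k) i = 2*π*n} ∩
        {k | ∀ i, k i ∈ Set.Ioc (-π) π})
      = lam '' {k | ∀ i, ∃ n : ℤ, (T.map (Int.cast : ℤ → ℝ) *ᵥ k) i = 2*π*n} ∧
    lam '' {k | ∀ i, ∃ n : ℤ, (T.map (Int.cast : ℤ → ℝ) *ᵥ k) i = 2*π*n}
      = lam '' {k | T.map (Int.cast : ℤ → ℝ) *ᵥ k = 0} ∧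
    (∃ a b : ℝ, a ≤ b ∧
      lam '' ({k | ∀ i, ∃ n : ℤ, (T.map (Int.cast : ℤ → ℝ) *ᵥ k) i = 2*π*n} ∩
        {k | ∀ i, k i ∈ Set.Ioc (-π) π}) = Set.Icc a b) ∧
    (∃ kmin ∈ ({k | ∀ i, ∃ n : ℤ, (T.map (Int.cast : ℤ → ℝ) *ᵥ k) i = 2*π*n} ∩
        {k | ∀ i, k i ∈ Set.Ioc (-π) π} : Set (Fin d → ℝ)),
      ∀ k ∈ {k : Fin d → ℝ | ∀ i, ∃ n : ℤ, (T.map (Int.cast : ℤ → ℝ) *ᵥ k) i = 2*π*n},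
        lam kmin ≤ lam k) ∧
    (∃ kmax ∈ ({k | ∀ i, ∃ n : ℤ, (T.map (Int.cast : ℤ → ℝ) *ᵥ k) i = 2*π*n} ∩
        {k | ∀ i, k i ∈ Set.Ioc (-π) π} : Set (Fin d → ℝ)),
      ∀ k ∈ {k : Fin d → ℝ | ∀ i, ∃ n : ℤ, (T.map (Int.cast : ℤ → ℝ) *ᵥ k) i = 2*π*n},
        lam k ≤ lam kmax) := by
  obtain ⟨S, hTS⟩ := hprim
  have h_cube := image_quasimomentumSet_inter_halfOpenCube T hper
  have h_ker := image_quasimomentumSet_eq_image_ker T hper hTS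
  have h_cpt := isCompact_image_quasimomentumSet T hper hcont
  have h_ne : (quasimomentumSet (T.map ((↑) : ℤ → ℝ))).Nonempty :=
    ⟨0, ker_subset_quasimomentumSet _ (mulVec_zero _)⟩
  have h_conn : IsConnected (lam '' quasimomentumSet (T.map ((↑) : ℤ → ℝ))) :=
    ⟨h_ne.image lam, h_ker ▸ (convex_ker _).isPreconnected.image lam hcont.continuousOn⟩
  exact ⟨h_cube, h_ker,
    ⟨_, _, csInf_le_csSup (h_ne.image lam) h_cpt.bddBelow h_cpt.bddAbove,
      h_cube.trans (eq_Icc_of_connected_compact h_conn h_cpt)⟩,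
    exists_forall_le_of_image_eq h_cube h_cpt h_ne,
    exists_forall_ge_of_image_eq h_cube h_cpt h_ne⟩

/-- for a continuous `2πℤ^d`-periodic `λ` and a primitive integer matrix `T`,
the images of `S_T ∩ (−π,π]^d`, of `S_T`, and of `ker T` under `λ` coincide, and this
common image is a closed interval `[a,b]`; in particular the extrema of `λ` over `S_T`
are attained on `S_T ∩ (−π,π]^d`. -/
theorem stmt_3 (d p : ℕ) (hd : 2 ≤ d) (hp : 1 ≤ p) (hpd : p < d)
    (lam : (Fin d → ℝ) → ℝ) (hcont : Continuous lam)
    (hper : ∀ (k : Fin d → ℝ) (n : Fin d → ℤ), lam (k + fun i => 2*π*(n i : ℝ)) = lam k)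
    (T : Matrix (Fin p) (Fin d) ℤ)
    (hprim : ∃ S : Matrix (Fin d) (Fin p) ℤ, T * S = 1) :
    lam '' ({k | ∀ i, ∃ n : ℤ, (T.map (Int.cast : ℤ → ℝ) *ᵥ k) i = 2*π*n} ∩
        {k | ∀ i, k i ∈ Set.Ioc (-π) π})
      = lam '' {k | ∀ i, ∃ n : ℤ, (T.map (Int.cast : ℤ → ℝ) *ᵥ k) i = 2*π*n} ∧
    lam '' {k | ∀ i, ∃ n : ℤ, (T.map (Int.cast : ℤ → ℝ) *ᵥ k) i = 2*π*n}
      = lam '' {k | T.map (Int.cast : ℤ → ℝ) *ᵥ k = 0} ∧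
    (∃ a b : ℝ, a ≤ b ∧
      lam '' ({k | ∀ i, ∃ n : ℤ, (T.map (Int.cast : ℤ → ℝ) *ᵥ k) i = 2*π*n} ∩
        {k | ∀ i, k i ∈ Set.Ioc (-π) π}) = Set.Icc a b) ∧
    (∃ kmin ∈ ({k | ∀ i, ∃ n : ℤ, (T.map (Int.cast : ℤ → ℝ) *ᵥ k) i = 2*π*n} ∩
        {k | ∀ i, k i ∈ Set.Ioc (-π) π} : Set (Fin d → ℝ)),
      ∀ k ∈ {k : Fin d → ℝ | ∀ i, ∃ n : ℤ, (T.map (Int.cast : ℤ → ℝ) *ᵥ k) i = 2*π*n},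
        lam kmin ≤ lam k) ∧
    (∃ kmax ∈ ({k | ∀ i, ∃ n : ℤ, (T.map (Int.cast : ℤ → ℝ) *ᵥ k) i = 2*π*n} ∩
        {k | ∀ i, k i ∈ Set.Ioc (-π) π} : Set (Fin d → ℝ)),
      ∀ k ∈ {k : Fin d → ℝ | ∀ i, ∃ n : ℤ, (T.map (Int.cast : ℤ → ℝ) *ᵥ k) i = 2*π*n},
        lam k ≤ lam kmax) :=
  stmt_3_general d p lam hcont hper T hprim
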